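/- Let p be an odd prime and let R = ℤ[X,Y]/(2X, pY). Consider the ring homomorphism φ : R → (ℤ/2)[X] × (ℤ/p)[Y] determined by sending the image of X to (X, 0) and the image of Y to (0, Y), and reducing integer coefficients modulo 2 and modulo p respectively in the two factors. Then the kernel of φ is exactly the ideal of R generated by the constant 2p. -/

import Mathlib

/-!
Because `2` and `p` are coprime, `(2p, 2X, pY)` contains every monomial divisible by `XY`, every
even multiple of a positive power of `X` and every `p`-multiple of a positive power of `Y`. On the other hand
`psi` reads off the coefficients of the powers of `X` modulo `2` and those of the powers of `Y`
modulo `p`, so its kernel is exactly `(2p) + (2X, pY)`, whose image in `ℤ[X,Y]/(2X, pY)` is `(2p)`.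
-/

open MvPolynomial

/-- The ideal `(2X, pY)` of `ℤ[X,Y]`. -/
noncomputable def dihedralIdeal (p : ℕ) : Ideal (MvPolynomial (Fin 2) ℤ) :=
  Ideal.span {C 2 * X 0, C (p : ℤ) * X 1}

/-- The ring homomorphism `ℤ[X,Y] → (ℤ/2)[X] × (ℤ/p)[Y]` sending `X ↦ (X, 0)`,
`Y ↦ (0, Y)` and reducing integer coefficients mod `2` and mod `p` respectively. -/
noncomputable def psi (p : ℕ) :
    MvPolynomial (Fin 2) ℤ →+* Polynomial (ZMod 2) × Polynomial (ZMod p) :=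
  RingHom.prod
    (eval₂Hom (Polynomial.C.comp (Int.castRingHom (ZMod 2))) ![Polynomial.X, 0])
    (eval₂Hom (Polynomial.C.comp (Int.castRingHom (ZMod p))) ![0, Polynomial.X])

theorem psi_vanishes (p : ℕ) : ∀ a ∈ dihedralIdeal p, psi p a = 0 := by
  intro a ha
  have hle : dihedralIdeal p ≤ RingHom.ker (psi p) := by
    rw [dihedralIdeal, Ideal.span_le]
    rintro x hx
    simp only [Set.mem_insert_iff, Set.mem_singleton_iff] at hx
    rcases hx with rfl | rfl
    · have h2 : ((2 : ℤ) : ZMod 2) = 0 := by decide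
      have h2' : (2 : Polynomial (ZMod 2)) = 0 := by
        rw [show (2 : Polynomial (ZMod 2)) = Polynomial.C (2 : ZMod 2) from (map_ofNat _ 2).symm,
          show (2 : ZMod 2) = 0 by decide, map_zero]
      show psi p (C 2 * X 0) = 0
      simp [psi, h2, h2', Prod.ext_iff]
    · have hpz : ((p : ℤ) : ZMod p) = 0 := by
        push_cast
        simp
      show psi p (C (p : ℤ) * X 1) = 0
      simp [psi, hpz, Prod.ext_iff]
  exact hle ha

/-- The induced ring homomorphism `φ : ℤ[X,Y]/(2X, pY) → (ℤ/2)[X] × (ℤ/p)[Y]`. -/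
noncomputable def phi (p : ℕ) :
    MvPolynomial (Fin 2) ℤ ⧸ dihedralIdeal p →+* Polynomial (ZMod 2) × Polynomial (ZMod p) :=
  Ideal.Quotient.lift (dihedralIdeal p) (psi p) (psi_vanishes p)

theorem coeff_eval₂_piSingle_X {σ R S : Type*} [DecidableEq σ] [CommSemiring R]
    [CommSemiring S] (g : R →+* S) (i : σ) (f : MvPolynomial σ R) (n : ℕ) :
    (eval₂ (Polynomial.C.comp g) (Pi.single i Polynomial.X) f).coeff n =
      g (coeff (Finsupp.single i n) f) := by
  induction f using MvPolynomial.induction_on' with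
  | monomial u a =>
    rw [eval₂_monomial, coeff_monomial]
    by_cases hu : ∃ k, u = Finsupp.single i k
    · obtain ⟨k, rfl⟩ := hu
      rw [Finsupp.prod_single_index (by simp), Pi.single_eq_same, RingHom.comp_apply,
        Polynomial.coeff_C_mul_X_pow]
      simp [(Finsupp.single_injective i).eq_iff, apply_ite g, eq_comm (a := k)]
    · push Not at hu
      obtain ⟨j, hj⟩ := Finsupp.ne_iff.mp (hu (u i))
      have hji : j ≠ i := by rintro rfl; simp at hj
      rw [Finsupp.single_eq_of_ne hji] at hj
      have hprod : (u.prod fun k e => (Pi.single i Polynomial.X : σ → Polynomial S) k ^ e) = 0 :=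
        Finset.prod_eq_zero (Finsupp.mem_support_iff.mpr hj) (by simp [hji, zero_pow hj])
      rw [hprod, mul_zero, Polynomial.coeff_zero, if_neg (hu n), map_zero]
  | add f g hf hg => simp only [eval₂_add, Polynomial.coeff_add, coeff_add, hf, hg, map_add]

theorem psi_C_two_mul_eq_zero (p : ℕ) : psi p (C (2 * p : ℤ)) = 0 := by
  ext1 <;> simp [psi, CharTwo.two_eq_zero]

section MonomialMem

variable {σ R : Type*} [CommSemiring R] {I : Ideal (MvPolynomial σ R)} {v : σ →₀ ℕ}

theorem monomial_mem_of_C_mul_X_mem {i : σ} {a c : R} (h : C a * X i ∈ I) (hv : v i ≠ 0)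
    (hc : a ∣ c) : monomial v c ∈ I := by
  obtain ⟨d, rfl⟩ := hc
  have hsplit : Finsupp.single i 1 + (v - Finsupp.single i 1) = v :=
    add_tsub_cancel_of_le (Finsupp.single_le_iff.mpr (Nat.one_le_iff_ne_zero.mpr hv))
  have : C a * X i * monomial (v - Finsupp.single i 1) d = monomial v (a * d) := by
    rw [X, C_mul_monomial, mul_one, monomial_mul, hsplit]
  exact this ▸ I.mul_mem_right _ h

theorem monomial_mem_of_isCoprime {i j : σ} {a b : R} (ha : C a * X i ∈ I) (hb : C b * X j ∈ I)
    (hab : IsCoprime a b) (hi : v i ≠ 0) (hj : v j ≠ 0) (c : R) : monomial v c ∈ I := by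
  obtain ⟨u, w, h⟩ := hab
  have hc : c = a * (u * c) + b * (w * c) := by
    calc c = (u * a + w * b) * c := by rw [h, one_mul]
      _ = a * (u * c) + b * (w * c) := by ring
  rw [hc, map_add]
  exact add_mem (monomial_mem_of_C_mul_X_mem ha hi (dvd_mul_right _ _))
    (monomial_mem_of_C_mul_X_mem hb hj (dvd_mul_right _ _))

end MonomialMem

section KerPsi

variable {p : ℕ} {f : MvPolynomial (Fin 2) ℤ}

theorem two_dvd_coeff_of_mem_ker_psi (hf : f ∈ RingHom.ker (psi p)) {v : Fin 2 →₀ ℕ}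
    (hv1 : v 1 = 0) : 2 ∣ coeff v f := by
  have hv : v = Finsupp.single 0 (v 0) := by ext i; fin_cases i <;> simp [hv1]
  have h := congrArg (fun q => Polynomial.coeff q (v 0)) (congrArg Prod.fst hf)
  have hX : ![Polynomial.X, 0] = Pi.single (0 : Fin 2) (Polynomial.X : Polynomial (ZMod 2)) := by
    ext1 i; fin_cases i <;> rfl
  simp only [psi, RingHom.prod_apply, coe_eval₂Hom, hX, coeff_eval₂_piSingle_X, Prod.fst_zero,
    Polynomial.coeff_zero] at h
  rw [hv]
  exact_mod_cast (ZMod.intCast_zmod_eq_zero_iff_dvd _ 2).mp h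

theorem dvd_coeff_of_mem_ker_psi (hf : f ∈ RingHom.ker (psi p)) {v : Fin 2 →₀ ℕ}
    (hv0 : v 0 = 0) : (p : ℤ) ∣ coeff v f := by
  have hv : v = Finsupp.single 1 (v 1) := by ext i; fin_cases i <;> simp [hv0]
  have h := congrArg (fun q => Polynomial.coeff q (v 1)) (congrArg Prod.snd hf)
  have hY : ![0, Polynomial.X] = Pi.single (1 : Fin 2) (Polynomial.X : Polynomial (ZMod p)) := by
    ext1 i; fin_cases i <;> rfl
  simp only [psi, RingHom.prod_apply, coe_eval₂Hom, hY, coeff_eval₂_piSingle_X, Prod.snd_zero,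
    Polynomial.coeff_zero] at h
  rw [hv]
  exact (ZMod.intCast_zmod_eq_zero_iff_dvd _ p).mp h

theorem monomial_coeff_mem_of_mem_ker_psi (hodd : Odd p) (hf : f ∈ RingHom.ker (psi p))
    (v : Fin 2 →₀ ℕ) :
    monomial v (coeff v f) ∈ Ideal.span {C (2 * p : ℤ)} ⊔ dihedralIdeal p := by
  have hcop : IsCoprime (2 : ℤ) p := by exact_mod_cast (Nat.coprime_two_left.mpr hodd).isCoprime
  have hX : C 2 * X 0 ∈ Ideal.span {C (2 * p : ℤ)} ⊔ dihedralIdeal p :=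
    Ideal.mem_sup_right (Ideal.subset_span (by simp))
  have hY : C (p : ℤ) * X 1 ∈ Ideal.span {C (2 * p : ℤ)} ⊔ dihedralIdeal p :=
    Ideal.mem_sup_right (Ideal.subset_span (by simp))
  by_cases h0 : v 0 = 0 <;> by_cases h1 : v 1 = 0
  · obtain ⟨d, hd⟩ := hcop.mul_dvd (two_dvd_coeff_of_mem_ker_psi hf h1)
      (dvd_coeff_of_mem_ker_psi hf h0)
    obtain rfl : v = 0 := by ext i; fin_cases i <;> simp [h0, h1]
    rw [monomial_zero']
    exact Ideal.mem_sup_left (Ideal.mem_span_singleton.mpr (map_dvd C ⟨d, hd⟩))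
  · exact monomial_mem_of_C_mul_X_mem hY h1 (dvd_coeff_of_mem_ker_psi hf h0)
  · exact monomial_mem_of_C_mul_X_mem hX h0 (two_dvd_coeff_of_mem_ker_psi hf h1)
  · exact monomial_mem_of_isCoprime hX hY hcop h0 h1 _

theorem ker_psi (hodd : Odd p) :
    RingHom.ker (psi p) = Ideal.span {C (2 * p : ℤ)} ⊔ dihedralIdeal p := by
  refine le_antisymm (fun f hf => ?_) (sup_le ?_ (fun f hf => psi_vanishes p f hf))
  · rw [f.as_sum]
    exact Ideal.sum_mem _ fun v _ => monomial_coeff_mem_of_mem_ker_psi hodd hf v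
  · rw [Ideal.span_le, Set.singleton_subset_iff]
    exact psi_C_two_mul_eq_zero p

end KerPsi

theorem ker_phi_eq_span_two_mul_p_general (p : ℕ) (hodd : Odd p) :
    RingHom.ker (phi p) =
      Ideal.span {Ideal.Quotient.mk (dihedralIdeal p) (C (2 * p : ℤ))} := by
  rw [phi, Ideal.ker_quotient_lift (psi p) (psi_vanishes p), ker_psi hodd, Ideal.map_sup,
    Ideal.map_quotient_self, sup_bot_eq, Ideal.map_span, Set.image_singleton]

/-- For `p` an odd prime, the kernel of
`φ : ℤ[X,Y]/(2X, pY) → (ℤ/2)[X] × (ℤ/p)[Y]` is the ideal generated by the constant `2p`. -/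
theorem ker_phi_eq_span_two_mul_p (p : ℕ) (hp : p.Prime) (hodd : Odd p) :
    RingHom.ker (phi p) =
      Ideal.span {Ideal.Quotient.mk (dihedralIdeal p) (C (2 * p : ℤ))} :=
  ker_phi_eq_span_two_mul_p_general p hodd
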